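/- arXiv:0802.3435 — 5 statements merged into one kernel-verified Lean document; each statement's English description precedes it below -/
import Mathlib

section
/- Let p be an odd prime and let ζ ∈ ℂ be a primitive p-th root of unity. Then ∑_{j=1}^{p-1} 1/(1-ζ^j)² = (p-1)(5-p)/12. (Equivalently, the holomorphic Lefschetz coefficient a₁ = (1/(p-1))·∑_{j=1}^{p-1} 1/((1-ζ^j)(1-ζ^j)) equals (5-p)/12.) -/
/-!
For a nontrivial `n`-th root of unity `z`, Abel summation expresses `∑_{k<n} k z^k` and
`∑_{k<n} k² z^k` as polynomials in `w = 1/(1 - z)`, namely `-n w` and `(2n - n²) w - 2n w²`.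
Summing over the nontrivial roots `ζ^j`, orthogonality of characters turns the left-hand sides
into `-∑ k` and `-∑ k²`; this gives first `∑ w = (n - 1)/2` and then `∑ w²`.
-/

open Finset

section PowerSums

variable {R : Type*} [CommRing R]

theorem sum_range_natCast_mul_two (n : ℕ) : (∑ k ∈ range n, (k : R)) * 2 = n * (n - 1) := by
  induction n with
  | zero => simp
  | succ n ih => rw [sum_range_succ, add_mul, ih]; push_cast; ring

theorem sum_range_natCast_sq_mul_six (n : ℕ) :
    (∑ k ∈ range n, (k : R) ^ 2) * 6 = n * (n - 1) * (2 * n - 1) := by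
  induction n with
  | zero => simp
  | succ n ih => rw [sum_range_succ, add_mul, ih]; push_cast; ring

end PowerSums

section RootOfUnity

variable {R : Type*} [CommRing R] {z : R} {n : ℕ}

theorem one_sub_mul_sum_range_mul_pow (hz : z ^ n = 1) (f : ℕ → R) :
    (1 - z) * ∑ k ∈ range n, f k * z ^ k =
      f 0 - f n + ∑ k ∈ range n, (f (k + 1) - f k) * z ^ (k + 1) := by
  have shift := sum_range_succ' (fun k ↦ f k * z ^ k) n
  rw [sum_range_succ, hz] at shift
  have hmul : ∑ k ∈ range n, f k * z ^ (k + 1) = z * ∑ k ∈ range n, f k * z ^ k := by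
    rw [mul_sum]
    exact sum_congr rfl fun k _ ↦ by ring
  simp only [sub_mul, sum_sub_distrib, hmul]
  linear_combination shift

variable [IsDomain R]

theorem geom_sum_eq_zero_of_pow_eq_one (hz : z ^ n = 1) (hz1 : z ≠ 1) :
    ∑ k ∈ range n, z ^ k = 0 := by
  refine eq_zero_of_ne_zero_of_mul_left_eq_zero (sub_ne_zero_of_ne hz1.symm) ?_
  rw [mul_neg_geom_sum, hz, sub_self]

theorem one_sub_mul_sum_range_natCast_mul_pow (hz : z ^ n = 1) (hz1 : z ≠ 1) :
    (1 - z) * ∑ k ∈ range n, (k : R) * z ^ k = -n := by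
  have h := one_sub_mul_sum_range_mul_pow hz (fun k ↦ (k : R))
  simp only [Nat.cast_zero, Nat.cast_succ, add_sub_cancel_left, one_mul, pow_succ', ← mul_sum,
    geom_sum_eq_zero_of_pow_eq_one hz hz1] at h
  linear_combination h

theorem one_sub_sq_mul_sum_range_natCast_sq_mul_pow (hz : z ^ n = 1) (hz1 : z ≠ 1) :
    (1 - z) ^ 2 * ∑ k ∈ range n, (k : R) ^ 2 * z ^ k = (2 * n - n ^ 2) * (1 - z) - 2 * n := by
  have h := one_sub_mul_sum_range_mul_pow hz (fun k ↦ (k : R) ^ 2)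
  have hdiff : ∀ k : ℕ, (((k + 1 : ℕ) : R) ^ 2 - (k : R) ^ 2) * z ^ (k + 1) =
      2 * z * ((k : R) * z ^ k) + z * z ^ k := fun k ↦ by push_cast; ring
  simp only [hdiff, sum_add_distrib, ← mul_sum, geom_sum_eq_zero_of_pow_eq_one hz hz1] at h
  linear_combination (1 - z) * h + 2 * z * one_sub_mul_sum_range_natCast_mul_pow hz hz1

end RootOfUnity

namespace IsPrimitiveRoot

section CommMonoid

variable {M : Type*} [CommMonoid M] {ζ : M} {n : ℕ}

theorem pow_pow_eq_one (hζ : IsPrimitiveRoot ζ n) (j : ℕ) : (ζ ^ j) ^ n = 1 := by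
  rw [pow_right_comm, hζ.pow_eq_one, one_pow]

theorem pow_ne_one_of_mem_Icc (hζ : IsPrimitiveRoot ζ n) {j : ℕ} (hj : j ∈ Icc 1 (n - 1)) :
    ζ ^ j ≠ 1 := by
  rw [mem_Icc] at hj
  exact hζ.pow_ne_one_of_pos_of_lt (by omega) (by omega)

end CommMonoid

section CommRing

variable {R : Type*} [CommRing R] [IsDomain R] {ζ : R} {n : ℕ}

theorem sum_Icc_pow_pow_eq_neg_one (hζ : IsPrimitiveRoot ζ n) (hn : 0 < n) {k : ℕ}
    (hk : ¬ n ∣ k) : ∑ j ∈ Icc 1 (n - 1), (ζ ^ j) ^ k = -1 := by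
  have hz1 : ζ ^ k ≠ 1 := mt (hζ.pow_eq_one_iff_dvd k).1 hk
  have h := geom_sum_eq_zero_of_pow_eq_one (hζ.pow_pow_eq_one k) hz1
  rw [range_eq_Ico, sum_eq_sum_Ico_succ_bot hn, pow_zero] at h
  have hIcc : Icc 1 (n - 1) = Ico 1 n := by ext; simp only [mem_Icc, mem_Ico]; omega
  simp only [hIcc, pow_right_comm ζ _ k]
  linear_combination h

theorem sum_Icc_sum_range_mul_pow (hζ : IsPrimitiveRoot ζ n) {f : ℕ → R} (hf : f 0 = 0) :
    ∑ j ∈ Icc 1 (n - 1), ∑ k ∈ range n, f k * (ζ ^ j) ^ k = -∑ k ∈ range n, f k := by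
  rw [sum_comm, ← sum_neg_distrib]
  refine sum_congr rfl fun k hk ↦ ?_
  have hkn := mem_range.1 hk
  rw [← mul_sum]
  rcases k.eq_zero_or_pos with rfl | hk0
  · simp [hf]
  · rw [hζ.sum_Icc_pow_pow_eq_neg_one (by omega) (Nat.not_dvd_of_pos_of_lt hk0 hkn), mul_neg_one]

end CommRing

variable {K : Type*} [Field K] [CharZero K] {ζ : K} {n : ℕ}

theorem sum_inv_one_sub_pow (hζ : IsPrimitiveRoot ζ n) (hn : 0 < n) :
    ∑ j ∈ Icc 1 (n - 1), (1 - ζ ^ j)⁻¹ = ((n : K) - 1) / 2 := by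
  have hterm : ∀ j ∈ Icc 1 (n - 1),
      ∑ k ∈ range n, (k : K) * (ζ ^ j) ^ k = -n * (1 - ζ ^ j)⁻¹ := fun j hj ↦ by
    have hz1 := hζ.pow_ne_one_of_mem_Icc hj
    rw [eq_mul_inv_iff_mul_eq₀ (sub_ne_zero.2 hz1.symm), mul_comm]
    exact one_sub_mul_sum_range_natCast_mul_pow (hζ.pow_pow_eq_one j) hz1
  have h := hζ.sum_Icc_sum_range_mul_pow (f := fun k ↦ (k : K)) Nat.cast_zero
  rw [sum_congr rfl hterm, ← mul_sum] at h
  rw [eq_div_iff two_ne_zero]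
  refine mul_left_cancel₀ (Nat.cast_ne_zero.2 hn.ne') ?_
  linear_combination -2 * h + sum_range_natCast_mul_two (R := K) n

theorem sum_inv_one_sub_pow_sq (hζ : IsPrimitiveRoot ζ n) (hn : 0 < n) :
    ∑ j ∈ Icc 1 (n - 1), ((1 - ζ ^ j) ^ 2)⁻¹ = ((n : K) - 1) * (5 - n) / 12 := by
  have hterm : ∀ j ∈ Icc 1 (n - 1), ∑ k ∈ range n, (k : K) ^ 2 * (ζ ^ j) ^ k =
      (2 * n - n ^ 2) * (1 - ζ ^ j)⁻¹ - 2 * n * ((1 - ζ ^ j) ^ 2)⁻¹ := fun j hj ↦ by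
    have hz1 := hζ.pow_ne_one_of_mem_Icc hj
    have h := one_sub_sq_mul_sum_range_natCast_sq_mul_pow (hζ.pow_pow_eq_one j) hz1
    have : 1 - ζ ^ j ≠ 0 := sub_ne_zero.2 hz1.symm
    field_simp
    linear_combination h
  have h := hζ.sum_Icc_sum_range_mul_pow (f := fun k ↦ (k : K) ^ 2) (by simp)
  rw [sum_congr rfl hterm, sum_sub_distrib, ← mul_sum, ← mul_sum, hζ.sum_inv_one_sub_pow hn] at h
  rw [eq_div_iff (by norm_num)]
  refine mul_left_cancel₀ (Nat.cast_ne_zero.2 hn.ne') ?_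
  linear_combination -6 * h + sum_range_natCast_sq_mul_six (R := K) n

end IsPrimitiveRoot

theorem sum_inv_one_sub_zeta_pow_sq_general (p : ℕ) (hp : p.Prime)
    (ζ : ℂ) (hζ : IsPrimitiveRoot ζ p) :
    ∑ j ∈ Finset.Icc 1 (p - 1), 1 / (1 - ζ ^ j) ^ 2 =
      ((p : ℂ) - 1) * (5 - (p : ℂ)) / 12 := by
  simpa only [one_div] using hζ.sum_inv_one_sub_pow_sq hp.pos

/-- For an odd prime `p` and a primitive `p`-th root of unity `ζ ∈ ℂ`,
`∑_{j=1}^{p-1} 1/(1-ζ^j)² = (p-1)(5-p)/12`. -/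
theorem sum_inv_one_sub_zeta_pow_sq (p : ℕ) (hp : p.Prime) (hodd : Odd p)
    (ζ : ℂ) (hζ : IsPrimitiveRoot ζ p) :
    ∑ j ∈ Finset.Icc 1 (p - 1), 1 / (1 - ζ ^ j) ^ 2 =
      ((p : ℂ) - 1) * (5 - (p : ℂ)) / 12 :=
  sum_inv_one_sub_zeta_pow_sq_general p hp ζ hζ
end

section
/- Let ζ ∈ ℂ be a primitive 7th root of unity and set x = (1 + ζ + ζ⁴)³ / ζ⁵ ∈ ℂ. Then the subfield of ℂ generated over ℚ by x equals the subfield of ℂ generated over ℚ by ζ + ζ⁻¹, i.e., ℚ(x) = ℚ(ζ + ζ⁻¹) as intermediate fields of ℂ/ℚ. In particular x is not a rational number. -/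
/-!
With `c = ζ + ζ⁻¹`, which is a root of `t³ + t² - 2t - 1`, reducing modulo `ζ⁷ = 1` and
`1 + ζ + ⋯ + ζ⁶ = 0` gives `x = 11 - 3c - 5c²`, and reducing modulo the cubic gives back
`13c = 5x² - 56x - 14`. So each of `x` and `c` is a rational polynomial in the other. If `x` were
rational then so would be `c`, but the cubic has no rational root (a rational root of a monic
integer polynomial divides the constant term).
-/

open Polynomial

namespace IntermediateField

variable {F E : Type*} [Field F] [Field E] [Algebra F E]

theorem aeval_mem_adjoin_simple (α : E) (p : F[X]) : aeval α p ∈ F⟮α⟯ :=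
  algebra_adjoin_le_adjoin F {α} (aeval_mem_adjoin_singleton F α)

theorem adjoin_simple_eq_of_eq_aeval {α β : E} {p q : F[X]} (hα : α = aeval β p)
    (hβ : β = aeval α q) : F⟮α⟯ = F⟮β⟯ :=
  le_antisymm (adjoin_simple_le_iff.2 (hα ▸ aeval_mem_adjoin_simple β p))
    (adjoin_simple_le_iff.2 (hβ ▸ aeval_mem_adjoin_simple α q))

end IntermediateField

theorem Rat.pow_three_add_sq_sub_two_mul_sub_one_ne_zero (r : ℚ) :
    r ^ 3 + r ^ 2 - 2 * r - 1 ≠ 0 := by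
  intro h
  have hmonic : (X ^ 3 + X ^ 2 - 2 * X - 1 : ℤ[X]).Monic := by monicity!
  have hroot : aeval r (X ^ 3 + X ^ 2 - 2 * X - 1 : ℤ[X]) = 0 := by simpa [map_ofNat] using h
  obtain ⟨n, rfl, hdvd⟩ := exists_integer_of_is_root_of_monic hmonic hroot
  have hn : IsUnit n := isUnit_of_dvd_one (by simpa using hdvd)
  rcases Int.isUnit_iff.mp hn with rfl | rfl <;> norm_num at h

namespace IsPrimitiveRoot

variable {K : Type*} [Field K] {ζ : K}

theorem geom_sum_seven_eq_zero (hζ : IsPrimitiveRoot ζ 7) :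
    1 + ζ + ζ ^ 2 + ζ ^ 3 + ζ ^ 4 + ζ ^ 5 + ζ ^ 6 = 0 := by
  simpa [Finset.sum_range_succ, add_assoc] using hζ.geom_sum_eq_zero (by norm_num)

theorem inv_eq_pow_six (hζ : IsPrimitiveRoot ζ 7) : ζ⁻¹ = ζ ^ 6 :=
  inv_eq_of_mul_eq_one_right (by rw [← pow_succ', hζ.pow_eq_one])

theorem add_inv_cubic_eq_zero (hζ : IsPrimitiveRoot ζ 7) :
    (ζ + ζ⁻¹) ^ 3 + (ζ + ζ⁻¹) ^ 2 - 2 * (ζ + ζ⁻¹) - 1 = 0 := by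
  rw [hζ.inv_eq_pow_six]
  linear_combination (-1 - ζ + 3 * ζ ^ 2 - ζ ^ 4 - 2 * ζ ^ 6 + 3 * ζ ^ 7 - ζ ^ 11 + ζ ^ 12) *
    hζ.geom_sum_seven_eq_zero

theorem one_add_add_pow_four_pow_three_div_pow_five (hζ : IsPrimitiveRoot ζ 7) :
    (1 + ζ + ζ ^ 4) ^ 3 / ζ ^ 5 = 11 - 3 * (ζ + ζ⁻¹) - 5 * (ζ + ζ⁻¹) ^ 2 := by
  rw [div_eq_iff (pow_ne_zero 5 (hζ.ne_zero (by norm_num))), hζ.inv_eq_pow_six]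
  linear_combination (5 + 3 * ζ + 3 * ζ ^ 2 + 5 * ζ ^ 3 + 3 * ζ ^ 4 + 11 * ζ ^ 5 + 5 * ζ ^ 10) *
    hζ.pow_eq_one + 6 * hζ.geom_sum_seven_eq_zero

end IsPrimitiveRoot

open IntermediateField in
/-- For a primitive 7th root of unity `ζ ∈ ℂ` and `x = (1 + ζ + ζ⁴)³ / ζ⁵`,
the subfield `ℚ(x)` of `ℂ` equals `ℚ(ζ + ζ⁻¹)`; in particular `x` is not rational. -/
theorem adjoin_trace_cubed_div_det_eq_adjoin_zeta_add_inv
    (ζ : ℂ) (hζ : IsPrimitiveRoot ζ 7) (x : ℂ)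
    (hx : x = (1 + ζ + ζ ^ 4) ^ 3 / ζ ^ 5) :
    IntermediateField.adjoin ℚ ({x} : Set ℂ) =
        IntermediateField.adjoin ℚ ({ζ + ζ⁻¹} : Set ℂ) ∧
      ∀ q : ℚ, (q : ℂ) ≠ x := by
  set c := ζ + ζ⁻¹
  have hcubic : c ^ 3 + c ^ 2 - 2 * c - 1 = 0 := hζ.add_inv_cubic_eq_zero
  have hxc : x = 11 - 3 * c - 5 * c ^ 2 := hx.trans hζ.one_add_add_pow_four_pow_three_div_pow_five
  have hcx : c = (5 * x ^ 2 - 56 * x - 14) / 13 := by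
    rw [eq_div_iff (by norm_num), hxc]
    linear_combination (-25) * (5 * c + 1) * hcubic
  refine ⟨adjoin_simple_eq_of_eq_aeval (p := 11 - 3 * X - 5 * X ^ 2)
    (q := C (1 / 13) * (5 * X ^ 2 - 56 * X - 14)) (by simpa [map_ofNat] using hxc)
    (by
      simp only [hcx, one_div, map_mul, aeval_C, map_inv₀, map_ofNat, aeval_sub, map_pow, aeval_X]
      ring), ?_⟩
  rintro q rfl
  rw [hcx] at hcubic
  exact Rat.pow_three_add_sq_sub_two_mul_sub_one_ne_zero ((5 * q ^ 2 - 56 * q - 14) / 13)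
    (by exact_mod_cast hcubic)
end

section
/- There are no integers d, a₂, a₃, b₁, b₂, b₃, c₁, c₂, c₃ satisfying all of the following: 0 ≤ a₂, 0 ≤ -2a₂ + a₃, 0 ≤ d + a₂ - 3a₃, 0 ≤ -2b₁ + b₂, 0 ≤ b₁ - 2b₂ + b₃, 0 ≤ 2 + 2d + b₂ - 3b₃, 0 ≤ -2c₁ + c₂, 0 ≤ c₁ - 2c₂ + c₃, 0 ≤ -1 + 4d + c₂ - 3c₃, -3d + a₃ + b₃ + c₃ = -1, and -2 - 9d² - 2a₂² + 2a₂a₃ - 3a₃² - 2b₁² + 2b₁b₂ - 2b₂² + 2b₂b₃ - 3b₃² - 2c₁² + 2c₁c₂ - 2c₂² + 2c₂c₃ - 3c₃² + 4b₃ - 2c₃ + 2d·a₃ + 4d·b₃ + 8d·c₃ = -1. -/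
/-!
Completing the square along each chain of exceptional curves bounds the chain part of `E²`
by a multiple of the square of its last coefficient. What remains is a quadratic function of
`d, a₃, b₃, c₃` which, on the hyperplane `E · K_Y = -1`, is at most `5/9`; hence
`E² ≤ -2 + 5/9 < -1`.
-/

section IntersectionForms

variable {K : Type*} [Field K] [LinearOrder K] [IsStrictOrderedRing K]

/- Intersection forms of the Hirzebruch–Jung chains `[2, 3]` and `[2, 2, 3]`; eliminating the
first coordinates leaves the last one with coefficient `-det [2, 3] / det [2] = -5/2`,
resp. `-det [2, 2, 3] / det [2, 2] = -7/3`. -/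

theorem chain_two_three_le (x y : K) :
    -2 * x ^ 2 + 2 * x * y - 3 * y ^ 2 ≤ -(5 / 2) * y ^ 2 := by
  nlinarith [sq_nonneg (2 * x - y)]

theorem chain_two_two_three_le (x y z : K) :
    -2 * x ^ 2 + 2 * x * y - 2 * y ^ 2 + 2 * y * z - 3 * z ^ 2 ≤ -(7 / 3) * z ^ 2 := by
  nlinarith [sq_nonneg (2 * x - y), sq_nonneg (3 * y - 2 * z)]

theorem reduced_form_le_of_linear (d a b c : K) (h : -3 * d + a + b + c = -1) :
    -9 * d ^ 2 - 5 / 2 * a ^ 2 - 7 / 3 * b ^ 2 - 7 / 3 * c ^ 2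
      + 4 * b - 2 * c + 2 * d * a + 4 * d * b + 8 * d * c ≤ 5 / 9 := by
  obtain rfl : d = (a + b + c + 1) / 3 := by linarith
  have hsos : -9 * ((a + b + c + 1) / 3) ^ 2 - 5 / 2 * a ^ 2 - 7 / 3 * b ^ 2 - 7 / 3 * c ^ 2
      + 4 * b - 2 * c + 2 * ((a + b + c + 1) / 3) * a + 4 * ((a + b + c + 1) / 3) * b
      + 8 * ((a + b + c + 1) / 3) * c
      = 5 / 9 - 2 * (b - c / 2 - 5 / 6) ^ 2 - (c - 1 - 4 * a) ^ 2 / 6 - a ^ 2 / 6 := by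
    ring
  rw [hsos]
  linarith [sq_nonneg (b - c / 2 - 5 / 6), sq_nonneg (c - 1 - 4 * a), sq_nonneg a]

end IntersectionForms

/-- The full integer system (case `m = 1`) in the proof that the minimal resolution of the
order-7 quotient of a fake projective plane contains no `(-1)`-curve has no solution. -/
theorem no_solution_full_system_m_one :
    ¬ ∃ d a₂ a₃ b₁ b₂ b₃ c₁ c₂ c₃ : ℤ,
        0 ≤ a₂ ∧ 0 ≤ (-2) * a₂ + a₃ ∧ 0 ≤ d + a₂ - 3 * a₃ ∧
        0 ≤ (-2) * b₁ + b₂ ∧ 0 ≤ b₁ - 2 * b₂ + b₃ ∧ 0 ≤ 2 + 2 * d + b₂ - 3 * b₃ ∧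
        0 ≤ (-2) * c₁ + c₂ ∧ 0 ≤ c₁ - 2 * c₂ + c₃ ∧ 0 ≤ -1 + 4 * d + c₂ - 3 * c₃ ∧
        (-3) * d + a₃ + b₃ + c₃ = -1 ∧
        -2 - 9 * d ^ 2 - 2 * a₂ ^ 2 + 2 * a₂ * a₃ - 3 * a₃ ^ 2
          - 2 * b₁ ^ 2 + 2 * b₁ * b₂ - 2 * b₂ ^ 2 + 2 * b₂ * b₃ - 3 * b₃ ^ 2
          - 2 * c₁ ^ 2 + 2 * c₁ * c₂ - 2 * c₂ ^ 2 + 2 * c₂ * c₃ - 3 * c₃ ^ 2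
          + 4 * b₃ - 2 * c₃ + 2 * d * a₃ + 4 * d * b₃ + 8 * d * c₃ = -1 := by
  rintro ⟨d, a₂, a₃, b₁, b₂, b₃, c₁, c₂, c₃, -, -, -, -, -, -, -, -, -, hlin, hsq⟩
  have hlin' : -3 * (d : ℚ) + a₃ + b₃ + c₃ = -1 := by exact_mod_cast hlin
  have hsq' := congrArg (Int.cast : ℤ → ℚ) hsq
  push_cast at hsq'
  linarith [chain_two_three_le (a₂ : ℚ) a₃, chain_two_two_three_le (b₁ : ℚ) b₂ b₃,
    chain_two_two_three_le (c₁ : ℚ) c₂ c₃, reduced_form_le_of_linear (d : ℚ) a₃ b₃ c₃ hlin']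
end

section
/- The 10×10 integer matrix with rows (-2, 0, 0, 0, 0, 0, 2, 0, 0, -1), (0, -9, 0, -1, 0, 0, -2, 0, 0, -4), (0, 0, -2, 1, 0, 0, 0, 0, 0, 0), (0, -1, 1, -3, 0, 0, 0, 0, 0, 0), (0, 0, 0, 0, -2, 1, 0, 0, 0, 0), (0, 0, 0, 0, 1, -2, 1, 0, 0, 0), (2, -2, 0, 0, 0, 1, -3, 0, 0, 0), (0, 0, 0, 0, 0, 0, 0, -2, 1, 0), (0, 0, 0, 0, 0, 0, 0, 1, -2, 1), (-1, -4, 0, 0, 0, 0, 0, 0, 1, -3) has determinant -1. -/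
/-!
Fraction-free Gaussian elimination turns the intersection matrix `M` into an upper triangular
matrix `U = L * M`, where `L` is lower triangular. The determinants of `L` and `U` are the
products of their diagonals, `947376` and `-947376`, so `det M = -1`.
-/

namespace Matrix

theorem det_eq_of_isLowerTriangular_mul_eq {n R : Type*} [Fintype n] [LinearOrder n]
    [CommRing R] [IsDomain R] {L M U : Matrix n n R} {d : R}
    (hL : L.IsLowerTriangular) (hU : U.IsUpperTriangular) (hLMU : L * M = U)
    (hL₀ : ∏ i, L i i ≠ 0) (hd : (∏ i, L i i) * d = ∏ i, U i i) : M.det = d :=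
  mul_left_cancel₀ hL₀ <| by
    rw [hd, ← det_of_isLowerTriangular L hL, ← det_of_isUpperTriangular hU, ← hLMU, det_mul]

end Matrix

def intersectionEliminator : Matrix (Fin 10) (Fin 10) ℤ :=
  !![1, 0, 0, 0, 0, 0, 0, 0, 0, 0;
     0, 1, 0, 0, 0, 0, 0, 0, 0, 0;
     0, 0, 1, 0, 0, 0, 0, 0, 0, 0;
     0, -2, 9, 18, 0, 0, 0, 0, 0, 0;
     0, 0, 0, 0, 1, 0, 0, 0, 0, 0;
     0, 0, 0, 0, 1, 2, 0, 0, 0, 0;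
     129, -30, 6, 12, 43, 86, 129, 0, 0, 0;
     0, 0, 0, 0, 0, 0, 0, 1, 0, 0;
     0, 0, 0, 0, 0, 0, 0, 1, 2, 0;
     3, -60, 12, 24, 18, 36, 54, 34, 68, 102]

def intersectionEchelon : Matrix (Fin 10) (Fin 10) ℤ :=
  !![-2, 0, 0, 0, 0, 0, 2, 0, 0, -1;
     0, -9, 0, -1, 0, 0, -2, 0, 0, -4;
     0, 0, -2, 1, 0, 0, 0, 0, 0, 0;
     0, 0, 0, -43, 0, 0, 4, 0, 0, 8;
     0, 0, 0, 0, -2, 1, 0, 0, 0, 0;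
     0, 0, 0, 0, 0, -3, 2, 0, 0, 0;
     0, 0, 0, 0, 0, 0, 17, 0, 0, -9;
     0, 0, 0, 0, 0, 0, 0, -2, 1, 0;
     0, 0, 0, 0, 0, 0, 0, 0, -3, 2;
     0, 0, 0, 0, 0, 0, 0, 0, 0, -1]

theorem intersectionEliminator_isLowerTriangular : intersectionEliminator.IsLowerTriangular := by
  decide

set_option maxRecDepth 2000 in
theorem intersectionEchelon_isUpperTriangular : intersectionEchelon.IsUpperTriangular := by
  decide

/-- The intersection matrix of the ten divisor classes `M, L, A₂, A₃, B₁, B₂, B₃, C₁, C₂, C₃`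
has determinant `-1`. -/
theorem intersection_matrix_det :
    Matrix.det
      !![(-2 : ℤ), 0, 0, 0, 0, 0, 2, 0, 0, -1;
         0, -9, 0, -1, 0, 0, -2, 0, 0, -4;
         0, 0, -2, 1, 0, 0, 0, 0, 0, 0;
         0, -1, 1, -3, 0, 0, 0, 0, 0, 0;
         0, 0, 0, 0, -2, 1, 0, 0, 0, 0;
         0, 0, 0, 0, 1, -2, 1, 0, 0, 0;
         2, -2, 0, 0, 0, 1, -3, 0, 0, 0;
         0, 0, 0, 0, 0, 0, 0, -2, 1, 0;
         0, 0, 0, 0, 0, 0, 0, 1, -2, 1;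
         -1, -4, 0, 0, 0, 0, 0, 0, 1, -3] = -1 :=
  Matrix.det_eq_of_isLowerTriangular_mul_eq intersectionEliminator_isLowerTriangular
    intersectionEchelon_isUpperTriangular (by decide) (by decide) (by decide)
end

section
/- Let n be a positive integer, let r ≥ 2 be an integer, and let m₁ ≤ m₂ ≤ ... ≤ m_r be integers with each m_i ≥ 2 and each m_i dividing n, such that 1/n = (r - 1) - ∑_{i=1}^{r} 1/m_i (as rational numbers). Then exactly one of the following holds: n = 2, r = 3 and (m₁, m₂, m₃) = (2, 2, 2); n = 3, r = 2 and (m₁, m₂) = (3, 3); n = 4, r = 2 and (m₁, m₂) = (2, 4); n = 6, r = 2 and (m₁, m₂) = (2, 3). In particular there is no solution with n = 5 or n ≥ 7. -/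
/-!
Each of the `r + 1` numbers `1/n, 1/mᵢ` is at most `1/2` and they sum to `r - 1`, so `r ≤ 3`,
and `r = 3` forces `n = 2`. For `r = 2` the equation reads `1/m₀ + 1/m₁ + 1/n = 1` with
`m₀ ≤ m₁ ≤ n`, whose only solutions are the Euclidean triangle triples `(3,3,3)`, `(2,4,4)`,
`(2,3,6)`.
-/

open Finset

theorem sum_one_div_le_card_div_two {ι : Type*} (s : Finset ι) (f : ι → ℕ)
    (hf : ∀ i ∈ s, 2 ≤ f i) : ∑ i ∈ s, (1 : ℚ) / f i ≤ #s / 2 := by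
  calc ∑ i ∈ s, (1 : ℚ) / f i ≤ ∑ _i ∈ s, (1 : ℚ) / 2 :=
        sum_le_sum fun i hi => by gcongr; exact_mod_cast hf i hi
    _ = #s / 2 := by rw [sum_const, nsmul_eq_mul, mul_one_div]

theorem triple_eq_of_one_div_add_one_div_add_one_div_eq_one {a b c : ℕ} (ha : 0 < a)
    (hab : a ≤ b) (hbc : b ≤ c) (h : 1 / (a : ℚ) + 1 / b + 1 / c = 1) :
    a = 3 ∧ b = 3 ∧ c = 3 ∨ a = 2 ∧ b = 4 ∧ c = 4 ∨ a = 2 ∧ b = 3 ∧ c = 6 := by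
  have hb : 0 < b := ha.trans_le hab
  have hc : 0 < c := hb.trans_le hbc
  have hnat : b * c + a * c + a * b = a * b * c := by
    field_simp at h
    norm_cast at h
    linarith
  have ha3 : a ≤ 3 := by
    refine Nat.le_of_mul_le_mul_right (c := b * c) ?_ (by positivity)
    nlinarith [Nat.mul_le_mul_right c hab, Nat.mul_le_mul_left b hbc]
  interval_cases a
  · nlinarith
  · have hb4 : b ≤ 4 := by nlinarith
    interval_cases b <;> omega
  · have hb3 : b ≤ 3 := by nlinarith
    interval_cases b; omega

/-- Canonical bundle formula analysis: if `n ≥ 1`, `r ≥ 2`, `m 0 ≤ m 1 ≤ … ≤ m (r-1)` are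
multiplicities `≥ 2` each dividing `n`, and `1/n = (r-1) - ∑ 1/mᵢ`, then the solution is
one of `(n, (mᵢ)) = (2,(2,2,2)), (3,(3,3)), (4,(2,4)), (6,(2,3))`; in particular
`n ≠ 5` and `n < 7`. -/
theorem multiple_fibre_multiplicities (n r : ℕ) (m : ℕ → ℕ)
    (hn : 0 < n) (hr : 2 ≤ r)
    (hmono : ∀ i j, i ≤ j → j < r → m i ≤ m j)
    (hm2 : ∀ i < r, 2 ≤ m i)
    (hdvd : ∀ i < r, m i ∣ n)
    (heq : (1 : ℚ) / n = (r - 1 : ℚ) - ∑ i ∈ Finset.range r, 1 / (m i : ℚ)) :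
    ((n = 2 ∧ r = 3 ∧ m 0 = 2 ∧ m 1 = 2 ∧ m 2 = 2) ∨
      (n = 3 ∧ r = 2 ∧ m 0 = 3 ∧ m 1 = 3) ∨
      (n = 4 ∧ r = 2 ∧ m 0 = 2 ∧ m 1 = 4) ∨
      (n = 6 ∧ r = 2 ∧ m 0 = 2 ∧ m 1 = 3)) ∧
      n ≠ 5 ∧ n < 7 := by
  have hmn : ∀ i < r, m i ≤ n := fun i hi => Nat.le_of_dvd hn (hdvd i hi)
  have hn2 : 2 ≤ n := (hm2 0 (by omega)).trans (hmn 0 (by omega))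
  have hsum : ∑ i ∈ range r, (1 : ℚ) / m i ≤ r / 2 := by
    simpa using sum_one_div_le_card_div_two (range r) m fun i hi => hm2 i (mem_range.mp hi)
  have hn_inv : (1 : ℚ) / n ≤ 1 / 2 := by gcongr; exact_mod_cast hn2
  have hr3 : r ≤ 3 := by
    have : (r : ℚ) ≤ 3 := by linarith
    exact_mod_cast this
  obtain rfl | rfl : r = 2 ∨ r = 3 := by omega
  · have heq2 : 1 / (m 0 : ℚ) + 1 / m 1 + 1 / n = 1 := by
      rw [sum_range_succ, sum_range_one] at heq
      push_cast at heq
      linarith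
    have := triple_eq_of_one_div_add_one_div_add_one_div_eq_one
      (Nat.zero_lt_two.trans_le (hm2 0 (by omega))) (hmono 0 1 (by omega) (by omega))
      (hmn 1 (by omega)) heq2
    omega
  · have hn_le : n ≤ 2 := by
      have : (1 : ℚ) / 2 ≤ 1 / n := by push_cast at hsum heq; linarith
      rw [one_div_le_one_div (by norm_num) (by positivity)] at this
      exact_mod_cast this
    have hm : ∀ i < 3, m i = 2 := fun i hi => le_antisymm ((hmn i hi).trans hn_le) (hm2 i hi)
    have := hm 0; have := hm 1; have := hm 2
    omega
end
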